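/- Let σ > 0, α ∈ ℝ, d a positive natural number, and m, m' ∈ ℝ^d. Let p_c(x) = (1/(σ√(2π)))·exp(−(x−c)²/(2σ²)) denote the density of the one-dimensional Gaussian N(c, σ²). Then ∫_{ℝ^d} ∏_{j=1}^d p_{m_j}(x_j)^α · p_{m'_j}(x_j)^{1−α} dx = exp( α(α−1)·‖m − m'‖₂² / (2σ²) ). In particular, for α > 1 the Rényi divergence of order α between the product Gaussians N(m, σ²I) and N(m', σ²I) equals α‖m−m'‖₂²/(2σ²), so a composition of J independent Gaussian mechanisms of ℓ₂ sensitivity 1 and noise variance σ² satisfies (α, αJ/(2σ²))-Rényi differential privacy. -/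

import Mathlib

/-! A geometric mean `p_c^α p_{c'}^{1-α}` of two Gaussian densities with the same variance is,
up to the constant factor `exp(α(α-1)(c-c')²/(2σ²))`, again a Gaussian density, centred at
`αc + (1-α)c'`; this is just completing the square in the exponent. Integrating gives the
one-dimensional identity, and Fubini on the product measure turns the `d`-dimensional integral
into a product of these, i.e. the exponential of a sum. -/

open Real MeasureTheory

noncomputable def gaussPdf (σ c x : ℝ) : ℝ :=
  (1 / (σ * Real.sqrt (2 * Real.pi))) * Real.exp (-(x - c) ^ 2 / (2 * σ ^ 2))

lemma gaussPdf_eq_gaussianPDFReal {σ : ℝ} (hσ : 0 ≤ σ) (c : ℝ) :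
    gaussPdf σ c = ProbabilityTheory.gaussianPDFReal c (σ ^ 2).toNNReal := by
  ext x
  rw [gaussPdf, ProbabilityTheory.gaussianPDFReal_def, one_div, coe_toNNReal _ (sq_nonneg σ),
    show 2 * π * σ ^ 2 = σ ^ 2 * (2 * π) by ring, sqrt_mul (sq_nonneg σ), sqrt_sq hσ]

lemma integral_gaussPdf {σ : ℝ} (hσ : 0 < σ) (c : ℝ) : ∫ x, gaussPdf σ c x = 1 := by
  rw [gaussPdf_eq_gaussianPDFReal hσ.le]
  refine ProbabilityTheory.integral_gaussianPDFReal_eq_one c ?_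
  simpa using hσ.ne'

lemma gaussPdf_rpow_mul_gaussPdf_rpow_one_sub {σ : ℝ} (hσ : 0 < σ) (α c c' x : ℝ) :
    gaussPdf σ c x ^ α * gaussPdf σ c' x ^ (1 - α)
      = exp (α * (α - 1) * (c - c') ^ 2 / (2 * σ ^ 2)) * gaussPdf σ (α * c + (1 - α) * c') x := by
  set A := 1 / (σ * sqrt (2 * π))
  have hA : 0 < A := by positivity
  have completing_square :
      -(x - c) ^ 2 / (2 * σ ^ 2) * α + -(x - c') ^ 2 / (2 * σ ^ 2) * (1 - α)
        = α * (α - 1) * (c - c') ^ 2 / (2 * σ ^ 2)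
          + -(x - (α * c + (1 - α) * c')) ^ 2 / (2 * σ ^ 2) := by
    field_simp
    ring
  simp only [gaussPdf]
  rw [mul_rpow hA.le (exp_nonneg _), mul_rpow hA.le (exp_nonneg _), ← exp_mul, ← exp_mul]
  calc A ^ α * exp (-(x - c) ^ 2 / (2 * σ ^ 2) * α)
          * (A ^ (1 - α) * exp (-(x - c') ^ 2 / (2 * σ ^ 2) * (1 - α)))
      = A ^ (α + (1 - α)) * exp (-(x - c) ^ 2 / (2 * σ ^ 2) * α
          + -(x - c') ^ 2 / (2 * σ ^ 2) * (1 - α)) := by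
        rw [rpow_add hA, exp_add]; ring
    _ = _ := by rw [add_sub_cancel, rpow_one, completing_square, exp_add]; ring

lemma integral_gaussPdf_rpow_mul_gaussPdf_rpow_one_sub {σ : ℝ} (hσ : 0 < σ) (α c c' : ℝ) :
    ∫ x, gaussPdf σ c x ^ α * gaussPdf σ c' x ^ (1 - α)
      = exp (α * (α - 1) * (c - c') ^ 2 / (2 * σ ^ 2)) := by
  simp_rw [gaussPdf_rpow_mul_gaussPdf_rpow_one_sub hσ]
  rw [integral_const_mul, integral_gaussPdf hσ, mul_one]

lemma integral_pi_prod_gaussPdf_rpow_mul_gaussPdf_rpow_one_sub {ι : Type*} [Fintype ι]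
    {σ : ℝ} (hσ : 0 < σ) (α : ℝ) (m m' : ι → ℝ) :
    ∫ x : ι → ℝ, ∏ j, gaussPdf σ (m j) (x j) ^ α * gaussPdf σ (m' j) (x j) ^ (1 - α)
      = exp (α * (α - 1) * (∑ j, (m j - m' j) ^ 2) / (2 * σ ^ 2)) := by
  rw [volume_pi, integral_fintype_prod_eq_prod
    (f := fun j x => gaussPdf σ (m j) x ^ α * gaussPdf σ (m' j) x ^ (1 - α))]
  simp_rw [integral_gaussPdf_rpow_mul_gaussPdf_rpow_one_sub hσ, ← exp_sum]
  rw [Finset.mul_sum, Finset.sum_div]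

theorem product_gaussian_renyi_divergence_general (σ α : ℝ) (hσ : 0 < σ)
    (d : ℕ) (m m' : Fin d → ℝ) :
    (∫ x : Fin d → ℝ, ∏ j, gaussPdf σ (m j) (x j) ^ α * gaussPdf σ (m' j) (x j) ^ (1 - α))
        = Real.exp (α * (α - 1) * (∑ j, (m j - m' j) ^ 2) / (2 * σ ^ 2)) ∧
      (1 < α →
        (1 / (α - 1)) * Real.log
            (∫ x : Fin d → ℝ,
              ∏ j, gaussPdf σ (m j) (x j) ^ α * gaussPdf σ (m' j) (x j) ^ (1 - α))
          = α * (∑ j, (m j - m' j) ^ 2) / (2 * σ ^ 2)) ∧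
      (1 < α → (∀ j, |m j - m' j| ≤ 1) →
        (1 / (α - 1)) * Real.log
            (∫ x : Fin d → ℝ,
              ∏ j, gaussPdf σ (m j) (x j) ^ α * gaussPdf σ (m' j) (x j) ^ (1 - α))
          ≤ α * (d : ℝ) / (2 * σ ^ 2)) := by
  have integral_eq := integral_pi_prod_gaussPdf_rpow_mul_gaussPdf_rpow_one_sub hσ α m m'
  have renyi_eq (hα : 1 < α) : (1 / (α - 1)) * log (∫ x : Fin d → ℝ,
      ∏ j, gaussPdf σ (m j) (x j) ^ α * gaussPdf σ (m' j) (x j) ^ (1 - α))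
        = α * (∑ j, (m j - m' j) ^ 2) / (2 * σ ^ 2) := by
    have : α - 1 ≠ 0 := by linarith
    rw [integral_eq, log_exp]
    field_simp
  refine ⟨integral_eq, renyi_eq, fun hα hm => ?_⟩
  have sum_sq_le : ∑ j, (m j - m' j) ^ 2 ≤ d := by
    simpa using Finset.sum_le_card_nsmul Finset.univ _ 1 fun j _ =>
      (sq_le_one_iff_abs_le_one _).mpr (hm j)
  rw [renyi_eq hα]
  gcongr

/-- Rényi divergence between product (spherical) Gaussians `N(m, σ²I)` and `N(m', σ²I)`:
`∫_{ℝ^d} ∏_j p_{m_j}(x_j)^α p_{m'_j}(x_j)^{1−α} dx = exp(α(α−1)‖m−m'‖₂²/(2σ²))`;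
hence for `α > 1` the order-`α` Rényi divergence equals `α‖m−m'‖₂²/(2σ²)`, so a
composition of `J = d` independent Gaussian mechanisms of ℓ₂ sensitivity `1` and noise
variance `σ²` satisfies `(α, αJ/(2σ²))`-Rényi differential privacy. -/
theorem product_gaussian_renyi_divergence (σ α : ℝ) (hσ : 0 < σ)
    (d : ℕ) (hd : 0 < d) (m m' : Fin d → ℝ) :
    (∫ x : Fin d → ℝ, ∏ j, gaussPdf σ (m j) (x j) ^ α * gaussPdf σ (m' j) (x j) ^ (1 - α))
        = Real.exp (α * (α - 1) * (∑ j, (m j - m' j) ^ 2) / (2 * σ ^ 2)) ∧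
      (1 < α →
        (1 / (α - 1)) * Real.log
            (∫ x : Fin d → ℝ,
              ∏ j, gaussPdf σ (m j) (x j) ^ α * gaussPdf σ (m' j) (x j) ^ (1 - α))
          = α * (∑ j, (m j - m' j) ^ 2) / (2 * σ ^ 2)) ∧
      (1 < α → (∀ j, |m j - m' j| ≤ 1) →
        (1 / (α - 1)) * Real.log
            (∫ x : Fin d → ℝ,
              ∏ j, gaussPdf σ (m j) (x j) ^ α * gaussPdf σ (m' j) (x j) ^ (1 - α))
          ≤ α * (d : ℝ) / (2 * σ ^ 2)) :=
  product_gaussian_renyi_divergence_general σ α hσ d m m'
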